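/- Let H be a Hopf algebra and U ⊂ H a subalgebra that is right strongly coisotropic, i.e. Δ_H(U) ⊂ U ⊗ U + H ⊗ [U,U], where [U,U] is the two-sided ideal of U generated by commutators. Then the set Ch(U) of algebra characters U → K carries an associative monoid structure with product (φψ)(u) = (φ ⊗ ψ)(Δ̃_U(u)), where Δ̃_U : U → U ⊗ U is induced by Δ_H via the identification (U ⊗ U + H ⊗ [U,U])/(H ⊗ [U,U]) ≅ U ⊗ U; and for any right H-module algebra A, the weight spaces A^ζ = {f ∈ A : f·u = ζ(u)f for all u ∈ U} satisfy A^{ζ₁}·A^{ζ₂} ⊂ A^{ζ₁ζ₂} for all characters ζ₁, ζ₂. -/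

import Mathlib

/- STATEMENT 16: If U is a right strongly coisotropic subalgebra of a Hopf algebra H
(Δ(U) ⊆ U ⊗ U + H ⊗ [U,U]), then the set of algebra characters of U carries a monoid
structure with (φψ)(u) = (φ ⊗ ψ)(Δ̃(u)) for any representative Δ(u) ≡ Σ aᵢ ⊗ bᵢ
mod H ⊗ [U,U] with aᵢ, bᵢ ∈ U, and for any right H-module algebra A the weight spaces
satisfy A^{ζ₁}·A^{ζ₂} ⊆ A^{ζ₁ζ₂}. -/

open TensorProduct

universe u

section defs

variable (K : Type u) [Field K] {H : Type u} [Ring H] [HopfAlgebra K H]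

/-- the image of `p ⊗ q` in `H ⊗ H`, for submodules `p, q ⊆ H`. -/
noncomputable def tpSubH (p q : Submodule K H) : Submodule K (H ⊗[K] H) :=
  Submodule.map₂ (TensorProduct.mk K H H) p q

/-- `[U,U]`: the two-sided ideal of `U` generated by commutators, as a submodule of `H`. -/
def commIdeal (U : Subalgebra K H) : Submodule K H :=
  Submodule.span K
    {z : H | ∃ a ∈ U, ∃ b ∈ U, ∃ c ∈ U, ∃ d ∈ U, z = a * (b * c - c * b) * d}

variable {A : Type u} [Ring A] [Algebra K A]

/-- the action of `H ⊗ H` on `A ⊗ A` induced componentwise by `act : H →ₗ End A`. -/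
noncomputable def act2 (act : H →ₗ[K] Module.End K A) :
    H ⊗[K] H →ₗ[K] A ⊗[K] A →ₗ[K] A ⊗[K] A :=
  TensorProduct.homTensorHomMap (RingHom.id K) A A A A ∘ₗ TensorProduct.map act act

end defs

/-
Extend each character φ of U to a linear functional φ̃ on H. The pairing φ̃ ⊗ ψ̃ on H ⊗ H kills
H ⊗ [U,U], because ψ̃ kills [U,U], and on U ⊗ U it only depends on φ and ψ; so on
Δ(U) ⊆ U ⊗ U + H ⊗ [U,U] it does not depend on the extensions, and φψ is the restriction to U of
the convolution φ̃ ⋆ ψ̃. It is multiplicative since H ⊗ [U,U] absorbs products with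
U ⊗ U + H ⊗ [U,U], while on U ⊗ U the pairing is the algebra map φ ⊗ ψ. Associativity and the
unit laws are inherited from the convolution algebra Hom(H, K). For the weight spaces, Δ(u)
acts on f ⊗ g through U ⊗ U by the scalar (ζ̃₁ ⊗ ζ̃₂)(Δ(u)), and H ⊗ [U,U] acts by zero since
[U,U] acts on g by ζ₂([U,U]) = 0.
-/

open WithConv

section tensorPairing

variable {R M N : Type*} [CommSemiring R] [AddCommMonoid M] [AddCommMonoid N] [Module R M]
  [Module R N]

noncomputable def tensorPairing (f : M →ₗ[R] R) (g : N →ₗ[R] R) : M ⊗[R] N →ₗ[R] R :=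
  LinearMap.mul' R R ∘ₗ TensorProduct.map f g

@[simp]
theorem tensorPairing_tmul (f : M →ₗ[R] R) (g : N →ₗ[R] R) (m : M) (n : N) :
    tensorPairing f g (m ⊗ₜ n) = f m * g n :=
  rfl

end tensorPairing

section tpSubH

variable {K H : Type u} [Field K] [Ring H] [HopfAlgebra K H]

theorem tpSubH_mul_le {p q p' q' r s : Submodule K H} (hp : p * p' ≤ r) (hq : q * q' ≤ s) :
    tpSubH K p q * tpSubH K p' q' ≤ tpSubH K r s := by
  simp only [tpSubH, Submodule.map₂_eq_span_image2, Submodule.span_mul_span, Submodule.span_le]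
  rintro _ ⟨_, ⟨a, ha, b, hb, rfl⟩, _, ⟨a', ha', b', hb', rfl⟩, rfl⟩
  exact Submodule.subset_span ⟨a * a', hp (Submodule.mul_mem_mul ha ha'), b * b',
    hq (Submodule.mul_mem_mul hb hb'), (Algebra.TensorProduct.tmul_mul_tmul ..).symm⟩

theorem tpSubH_le_ker_tensorPairing {p q : Submodule K H} (f : H →ₗ[K] K) {g : H →ₗ[K] K}
    (hg : q ≤ LinearMap.ker g) : tpSubH K p q ≤ LinearMap.ker (tensorPairing f g) :=
  Submodule.map₂_le.2 fun _ _ _ hn => by simp [LinearMap.mem_ker.1 (hg hn)]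

theorem tpSubH_le_eqLocus_tensorPairing {p q : Submodule K H} {f f' g g' : H →ₗ[K] K}
    (hf : p ≤ LinearMap.eqLocus f f') (hg : q ≤ LinearMap.eqLocus g g') :
    tpSubH K p q ≤ LinearMap.eqLocus (tensorPairing f g) (tensorPairing f' g') :=
  Submodule.map₂_le.2 fun _ hm _ hn => by
    simp [LinearMap.mem_eqLocus.1 (hf hm), LinearMap.mem_eqLocus.1 (hg hn)]

theorem act2_tmul_tmul {A : Type u} [Ring A] [Algebra K A] (act : H →ₗ[K] Module.End K A)
    (a b : H) (f g : A) : act2 K act (a ⊗ₜ b) (f ⊗ₜ g) = act a f ⊗ₜ act b g := by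
  simp [act2, TensorProduct.homTensorHomMap_apply]

end tpSubH

namespace Subalgebra

variable {K H : Type u} [Field K] [Ring H] [HopfAlgebra K H] (U : Subalgebra K H)

theorem commIdeal_le_toSubmodule : commIdeal K U ≤ U.toSubmodule :=
  Submodule.span_le.2 fun _ ⟨_, ha, _, hb, _, hc, _, hd, hz⟩ =>
    hz ▸ (mul_mem (mul_mem ha (sub_mem (mul_mem hb hc) (mul_mem hc hb))) hd : _ ∈ U)

theorem toSubmodule_mul_commIdeal_le : U.toSubmodule * commIdeal K U ≤ commIdeal K U := by
  refine Submodule.mul_le.2 fun h hh z hz => ?_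
  refine (Submodule.span_le (p := (commIdeal K U).comap (LinearMap.mulLeft K h))).2 ?_ hz
  rintro _ ⟨a, ha, b, hb, c, hc, d, hd, rfl⟩
  exact Submodule.subset_span ⟨h * a, mul_mem hh ha, b, hb, c, hc, d, hd, by
    rw [LinearMap.mulLeft_apply]; noncomm_ring⟩

theorem commIdeal_mul_toSubmodule_le : commIdeal K U * U.toSubmodule ≤ commIdeal K U := by
  refine Submodule.mul_le.2 fun z hz h hh => ?_
  refine (Submodule.span_le (p := (commIdeal K U).comap (LinearMap.mulRight K h))).2 ?_ hz
  rintro _ ⟨a, ha, b, hb, c, hc, d, hd, rfl⟩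
  exact Submodule.subset_span ⟨a, ha, b, hb, c, hc, d * h, mul_mem hd hh, by
    rw [LinearMap.mulRight_apply]; noncomm_ring⟩

theorem commIdeal_mul_commIdeal_le : commIdeal K U * commIdeal K U ≤ commIdeal K U :=
  (mul_le_mul_left (commIdeal_le_toSubmodule U) _).trans (toSubmodule_mul_commIdeal_le U)

def IsRightStronglyCoisotropic : Prop :=
  ∀ u ∈ U, Coalgebra.comul (R := K) u ∈
    tpSubH K U.toSubmodule U.toSubmodule ⊔ tpSubH K ⊤ (commIdeal K U)

noncomputable def charExtend (φ : U →ₐ[K] K) : H →ₗ[K] K :=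
  (LinearMap.exists_extend (p := U.toSubmodule) φ.toLinearMap).choose

variable {U}

theorem charExtend_apply (φ : U →ₐ[K] K) (u : U) : U.charExtend φ u = φ u :=
  LinearMap.congr_fun
    (LinearMap.exists_extend (p := U.toSubmodule) φ.toLinearMap).choose_spec u

theorem charExtend_one (φ : U →ₐ[K] K) : U.charExtend φ 1 = 1 :=
  (charExtend_apply φ 1).trans (map_one φ)

theorem toSubmodule_le_eqLocus_charExtend {φ : U →ₐ[K] K} {F : H →ₗ[K] K}
    (h : ∀ u : U, φ u = F u) : U.toSubmodule ≤ LinearMap.eqLocus (U.charExtend φ) F :=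
  fun x hx => (charExtend_apply φ ⟨x, hx⟩).trans (h ⟨x, hx⟩)

theorem commIdeal_le_ker_charExtend (φ : U →ₐ[K] K) :
    commIdeal K U ≤ LinearMap.ker (U.charExtend φ) := by
  refine Submodule.span_le.2 ?_
  rintro _ ⟨a, ha, b, hb, c, hc, d, hd, rfl⟩
  change U.charExtend φ (⟨a, ha⟩ * (⟨b, hb⟩ * ⟨c, hc⟩ - ⟨c, hc⟩ * ⟨b, hb⟩) * ⟨d, hd⟩ : U) = 0
  rw [charExtend_apply]
  simp only [map_mul, map_sub]
  ring

variable {f f' g g' : H →ₗ[K] K}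

theorem sup_le_eqLocus_tensorPairing (hf : U.toSubmodule ≤ LinearMap.eqLocus f f')
    (hg : U.toSubmodule ≤ LinearMap.eqLocus g g') (hJ : commIdeal K U ≤ LinearMap.ker g) :
    tpSubH K U.toSubmodule U.toSubmodule ⊔ tpSubH K ⊤ (commIdeal K U) ≤
      LinearMap.eqLocus (tensorPairing f g) (tensorPairing f' g') := by
  have hJ' : commIdeal K U ≤ LinearMap.ker g' := fun z hz =>
    (LinearMap.mem_eqLocus.1 (hg (commIdeal_le_toSubmodule U hz))).symm.trans (hJ hz)
  refine sup_le (tpSubH_le_eqLocus_tensorPairing hf hg) fun w hw => ?_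
  rw [LinearMap.mem_eqLocus, tpSubH_le_ker_tensorPairing f hJ hw,
    tpSubH_le_ker_tensorPairing f' hJ' hw]

theorem convMul_apply_congr (hU : U.IsRightStronglyCoisotropic)
    (hf : U.toSubmodule ≤ LinearMap.eqLocus f f') (hg : U.toSubmodule ≤ LinearMap.eqLocus g g')
    (hJ : commIdeal K U ≤ LinearMap.ker g) (u : U) :
    (toConv f * toConv g) u = (toConv f' * toConv g') u :=
  sup_le_eqLocus_tensorPairing hf hg hJ (hU u u.2)

theorem tpSubH_toSubmodule_eq_range :
    tpSubH K U.toSubmodule U.toSubmodule =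
      LinearMap.range (Algebra.TensorProduct.map U.val U.val).toLinearMap := by
  change _ = LinearMap.range (TensorProduct.map U.val.toLinearMap U.val.toLinearMap)
  have hval : LinearMap.range U.val.toLinearMap = U.toSubmodule := by ext; simp
  rw [TensorProduct.range_map, hval]
  rfl

theorem tensorPairing_charExtend_map_val (φ ψ : U →ₐ[K] K) (z : U ⊗[K] U) :
    tensorPairing (U.charExtend φ) (U.charExtend ψ) (Algebra.TensorProduct.map U.val U.val z) =
      Algebra.TensorProduct.lmul' K (Algebra.TensorProduct.map φ ψ z) := by
  induction z with
  | zero => simp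
  | tmul a b => simp [charExtend_apply]
  | add a b ha hb => simp only [map_add, ha, hb]

theorem tensorPairing_charExtend_mul_of_mem {φ ψ : U →ₐ[K] K} {x y : H ⊗[K] H}
    (hx : x ∈ tpSubH K U.toSubmodule U.toSubmodule)
    (hy : y ∈ tpSubH K U.toSubmodule U.toSubmodule) :
    tensorPairing (U.charExtend φ) (U.charExtend ψ) (x * y) =
      tensorPairing (U.charExtend φ) (U.charExtend ψ) x *
        tensorPairing (U.charExtend φ) (U.charExtend ψ) y := by
  rw [tpSubH_toSubmodule_eq_range] at hx hy
  obtain ⟨x, rfl⟩ := hx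
  obtain ⟨y, rfl⟩ := hy
  simp only [AlgHom.toLinearMap_apply, ← map_mul, tensorPairing_charExtend_map_val]

theorem tensorPairing_charExtend_mul {φ ψ : U →ₐ[K] K} {x y : H ⊗[K] H}
    (hx : x ∈ tpSubH K U.toSubmodule U.toSubmodule ⊔ tpSubH K ⊤ (commIdeal K U))
    (hy : y ∈ tpSubH K U.toSubmodule U.toSubmodule ⊔ tpSubH K ⊤ (commIdeal K U)) :
    tensorPairing (U.charExtend φ) (U.charExtend ψ) (x * y) =
      tensorPairing (U.charExtend φ) (U.charExtend ψ) x *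
        tensorPairing (U.charExtend φ) (U.charExtend ψ) y := by
  obtain ⟨x, hxU, w, hw, rfl⟩ := Submodule.mem_sup.1 hx
  obtain ⟨y, hyU, w', hw', rfl⟩ := Submodule.mem_sup.1 hy
  have hJ : x * w' + w * y + w * w' ∈ tpSubH K ⊤ (commIdeal K U) :=
    add_mem (add_mem
      (tpSubH_mul_le le_top (toSubmodule_mul_commIdeal_le U) (Submodule.mul_mem_mul hxU hw'))
      (tpSubH_mul_le le_top (commIdeal_mul_toSubmodule_le U) (Submodule.mul_mem_mul hw hyU)))
      (tpSubH_mul_le le_top (commIdeal_mul_commIdeal_le U) (Submodule.mul_mem_mul hw hw'))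
  have hker := tpSubH_le_ker_tensorPairing (p := ⊤) (U.charExtend φ) (commIdeal_le_ker_charExtend ψ)
  rw [show (x + w) * (y + w') = x * y + (x * w' + w * y + w * w') by noncomm_ring,
    map_add, hker hJ, map_add, hker hw, map_add, hker hw', add_zero, add_zero, add_zero]
  exact tensorPairing_charExtend_mul_of_mem hxU hyU

noncomputable def charMul (hU : U.IsRightStronglyCoisotropic) (φ ψ : U →ₐ[K] K) :
    U →ₐ[K] K :=
  AlgHom.ofLinearMap
    ((toConv (U.charExtend φ) * toConv (U.charExtend ψ)).ofConv ∘ₗ U.val.toLinearMap)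
    (by
      change tensorPairing _ _ (Coalgebra.comul (1 : H)) = 1
      rw [Bialgebra.comul_one, Algebra.TensorProduct.one_def, tensorPairing_tmul,
        charExtend_one, charExtend_one, one_mul])
    (fun u v => by
      change tensorPairing _ _ (Coalgebra.comul (u * v : H)) =
        tensorPairing _ _ (Coalgebra.comul (u : H)) * tensorPairing _ _ (Coalgebra.comul (v : H))
      rw [Bialgebra.comul_mul]
      exact tensorPairing_charExtend_mul (hU u u.2) (hU v v.2))

theorem charMul_apply (hU : U.IsRightStronglyCoisotropic) (φ ψ : U →ₐ[K] K) (u : U) :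
    U.charMul hU φ ψ u =
      tensorPairing (U.charExtend φ) (U.charExtend ψ) (Coalgebra.comul (R := K) (u : H)) :=
  rfl

theorem sup_le_eqLocus_mul'_act2 {A : Type u} [Ring A] [Algebra K A]
    (act : H →ₗ[K] Module.End K A) {ζ₁ ζ₂ : U →ₐ[K] K} {f g : A}
    (hf : ∀ u : U, act u f = ζ₁ u • f) (hg : ∀ u : U, act u g = ζ₂ u • g) :
    tpSubH K U.toSubmodule U.toSubmodule ⊔ tpSubH K ⊤ (commIdeal K U) ≤
      LinearMap.eqLocus (LinearMap.mul' K A ∘ₗ (act2 K act).flip (f ⊗ₜ g))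
        ((tensorPairing (U.charExtend ζ₁) (U.charExtend ζ₂)).smulRight (f * g)) := by
  refine sup_le (Submodule.map₂_le.2 fun m hm n hn => ?_) (Submodule.map₂_le.2 fun m _ n hn => ?_)
  · have hfm : act m f = ζ₁ ⟨m, hm⟩ • f := hf ⟨m, hm⟩
    have hgn : act n g = ζ₂ ⟨n, hn⟩ • g := hg ⟨n, hn⟩
    have hζ₁ : U.charExtend ζ₁ m = ζ₁ ⟨m, hm⟩ := charExtend_apply ζ₁ ⟨m, hm⟩
    have hζ₂ : U.charExtend ζ₂ n = ζ₂ ⟨n, hn⟩ := charExtend_apply ζ₂ ⟨n, hn⟩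
    show LinearMap.mul' K A (act2 K act (m ⊗ₜ n) (f ⊗ₜ g)) =
      tensorPairing (U.charExtend ζ₁) (U.charExtend ζ₂) (m ⊗ₜ[K] n) • (f * g)
    rw [act2_tmul_tmul, hfm, hgn, tensorPairing_tmul, hζ₁, hζ₂, LinearMap.mul'_apply,
      smul_mul_smul_comm]
  · have hgn : act n g = 0 := by
      rw [show act n g = _ from hg ⟨n, commIdeal_le_toSubmodule U hn⟩, ← charExtend_apply,
        commIdeal_le_ker_charExtend ζ₂ hn, zero_smul]
    show LinearMap.mul' K A (act2 K act (m ⊗ₜ n) (f ⊗ₜ g)) =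
      tensorPairing (U.charExtend ζ₁) (U.charExtend ζ₂) (m ⊗ₜ[K] n) • (f * g)
    rw [act2_tmul_tmul, hgn, tensorPairing_tmul, commIdeal_le_ker_charExtend ζ₂ hn, mul_zero,
      zero_smul, tmul_zero, map_zero]

variable (hU : U.IsRightStronglyCoisotropic)
include hU

theorem charMul_assoc (φ ψ χ : U →ₐ[K] K) :
    U.charMul hU (U.charMul hU φ ψ) χ = U.charMul hU φ (U.charMul hU ψ χ) := by
  ext u
  calc U.charMul hU (U.charMul hU φ ψ) χ u
      = ((toConv (U.charExtend φ) * toConv (U.charExtend ψ)) * toConv (U.charExtend χ)) u :=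
        convMul_apply_congr hU (toSubmodule_le_eqLocus_charExtend fun _ => rfl) (fun _ _ => rfl)
          (commIdeal_le_ker_charExtend χ) u
    _ = (toConv (U.charExtend φ) * (toConv (U.charExtend ψ) * toConv (U.charExtend χ))) u := by
        rw [mul_assoc]
    _ = U.charMul hU φ (U.charMul hU ψ χ) u :=
        (convMul_apply_congr hU (fun _ _ => rfl) (toSubmodule_le_eqLocus_charExtend fun _ => rfl)
          (commIdeal_le_ker_charExtend _) u).symm

theorem counit_charMul (φ : U →ₐ[K] K) :
    U.charMul hU ((Bialgebra.counitAlgHom K H).comp U.val) φ = φ := by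
  ext u
  calc U.charMul hU ((Bialgebra.counitAlgHom K H).comp U.val) φ u
      = (1 * toConv (U.charExtend φ)) u :=
        convMul_apply_congr hU (toSubmodule_le_eqLocus_charExtend fun _ => by simp)
          (fun _ _ => rfl) (commIdeal_le_ker_charExtend φ) u
    _ = φ u := by rw [one_mul]; exact charExtend_apply φ u

theorem charMul_counit (φ : U →ₐ[K] K) :
    U.charMul hU φ ((Bialgebra.counitAlgHom K H).comp U.val) = φ := by
  ext u
  calc U.charMul hU φ ((Bialgebra.counitAlgHom K H).comp U.val) u
      = (toConv (U.charExtend φ) * 1) u :=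
        convMul_apply_congr hU (fun _ _ => rfl)
          (toSubmodule_le_eqLocus_charExtend fun _ => by simp) (commIdeal_le_ker_charExtend _) u
    _ = φ u := by rw [mul_one]; exact charExtend_apply φ u

theorem charMul_apply_of_comul_eq (φ ψ : U →ₐ[K] K) (u : U) {ι : Type*} (s : Finset ι)
    {a b : ι → H} (ha : ∀ i ∈ s, a i ∈ U) (hb : ∀ i ∈ s, b i ∈ U) {w : H ⊗[K] H}
    (hw : w ∈ tpSubH K ⊤ (commIdeal K U))
    (hΔ : Coalgebra.comul (R := K) (u : H) = ∑ i ∈ s, a i ⊗ₜ[K] b i + w) :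
    U.charMul hU φ ψ u = ∑ i ∈ s.attach, φ ⟨a i, ha i i.2⟩ * ψ ⟨b i, hb i i.2⟩ := by
  rw [charMul_apply, hΔ, map_add, tpSubH_le_ker_tensorPairing _ (commIdeal_le_ker_charExtend ψ) hw,
    add_zero, map_sum, ← Finset.sum_attach s]
  refine Finset.sum_congr rfl fun i _ => ?_
  rw [tensorPairing_tmul, ← charExtend_apply φ, ← charExtend_apply ψ]

theorem act_mul_eq_charMul_smul {A : Type u} [Ring A] [Algebra K A]
    (act : H →ₗ[K] Module.End K A)
    (hact : ∀ (h : H) (f g : A),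
      act h (f * g) = LinearMap.mul' K A (act2 K act (Coalgebra.comul (R := K) h) (f ⊗ₜ[K] g)))
    {ζ₁ ζ₂ : U →ₐ[K] K} {f g : A} (hf : ∀ u : U, act u f = ζ₁ u • f)
    (hg : ∀ u : U, act u g = ζ₂ u • g) (u : U) :
    act u (f * g) = U.charMul hU ζ₁ ζ₂ u • (f * g) :=
  (hact u f g).trans (sup_le_eqLocus_mul'_act2 act hf hg (hU u u.2))

end Subalgebra

theorem stmt16 {K H : Type u} [Field K] [Ring H] [HopfAlgebra K H]
    (U : Subalgebra K H)
    -- U is right strongly coisotropic: Δ(U) ⊆ U ⊗ U + H ⊗ [U,U]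
    (hU : ∀ u ∈ U, Coalgebra.comul (R := K) u ∈
      tpSubH K U.toSubmodule U.toSubmodule ⊔ tpSubH K ⊤ (commIdeal K U)) :
    ∃ mul : (U →ₐ[K] K) → (U →ₐ[K] K) → (U →ₐ[K] K),
      -- the product is given by (φψ)(u) = (φ ⊗ ψ)(Δ̃(u)), computed from any
      -- decomposition Δ(u) = Σᵢ aᵢ ⊗ bᵢ + w with aᵢ, bᵢ ∈ U and w ∈ H ⊗ [U,U]:
      (∀ (φ ψ : U →ₐ[K] K) (u : U) (ι : Type u) (s : Finset ι) (a b : ι → H)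
          (ha : ∀ i ∈ s, a i ∈ U) (hb : ∀ i ∈ s, b i ∈ U) (w : H ⊗[K] H),
          w ∈ tpSubH K ⊤ (commIdeal K U) →
          Coalgebra.comul (R := K) (u : H) = (∑ i ∈ s, a i ⊗ₜ[K] b i) + w →
          mul φ ψ u = ∑ i ∈ s.attach, φ ⟨a i, ha i i.2⟩ * ψ ⟨b i, hb i i.2⟩)
      -- it is associative with identity the restriction of the counit, so that the
      -- characters of U form a monoid:
      ∧ (∀ φ ψ χ : U →ₐ[K] K, mul (mul φ ψ) χ = mul φ (mul ψ χ))
      ∧ (∀ φ : U →ₐ[K] K, mul ((Bialgebra.counitAlgHom K H).comp U.val) φ = φ)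
      ∧ (∀ φ : U →ₐ[K] K, mul φ ((Bialgebra.counitAlgHom K H).comp U.val) = φ)
      -- and for every right H-module algebra A, weight spaces multiply as
      -- A^{ζ₁} · A^{ζ₂} ⊆ A^{ζ₁ζ₂}:
      ∧ (∀ (A : Type u) (_ : Ring A) (_ : Algebra K A)
          (act : H →ₗ[K] Module.End K A)
          (_ : ∀ h h' : H, act (h * h') = act h' * act h) (_ : act 1 = 1)
          (_ : ∀ (h : H) (f g : A),
            act h (f * g) = LinearMap.mul' K A (act2 K act (Coalgebra.comul (R := K) h) (f ⊗ₜ[K] g)))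
          (_ : ∀ h : H, act h (1 : A) = Coalgebra.counit (R := K) h • (1 : A))
          (ζ₁ ζ₂ : U →ₐ[K] K) (f g : A),
          (∀ u : U, act u f = ζ₁ u • f) → (∀ u : U, act u g = ζ₂ u • g) →
          ∀ u : U, act u (f * g) = mul ζ₁ ζ₂ u • (f * g)) := by
  refine ⟨U.charMul hU, fun φ ψ u _ s _ _ ha hb _ hw hΔ =>
      U.charMul_apply_of_comul_eq hU φ ψ u s ha hb hw hΔ,
    U.charMul_assoc hU, U.counit_charMul hU, U.charMul_counit hU, ?_⟩
  intro A _ _ act _ _ hact _ ζ₁ ζ₂ f g hf hg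
  exact U.act_mul_eq_charMul_smul hU act hact hf hg
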